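/- Let D ⊂ ℂⁿ and G ⊂ ℂᵐ be domains, let A ⊂ D and B ⊂ G be non-pluripolar subsets, and let X = 𝕏(D,A;G,B). If A and B are locally pluriregular, then the set X̂ = {(z,w) ∈ D×G : ω_{A,D}(z) + ω_{B,G}(w) < 1} is a domain, i.e. it is open and connected. -/

import Mathlib

open Set Filter Metric

/-- A function `u` with values in `EReal = ℝ ∪ {±∞}` is *plurisubharmonic* on an open set
`Ω` if it is upper semicontinuous on `Ω` and, along every complex line, it satisfies the
sub-mean / harmonic-majorization principle on closed discs contained in `Ω`:
whenever `u` is dominated on the boundary circle of such a disc by the real part of a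
(holomorphic) polynomial, it is dominated by it inside as well. -/
def PlurisubharmonicOn {E : Type*} [NormedAddCommGroup E] [NormedSpace ℂ E]
    (u : E → EReal) (Ω : Set E) : Prop :=
  UpperSemicontinuousOn u Ω ∧
    ∀ a b : E, (∀ lam : ℂ, ‖lam‖ ≤ 1 → a + lam • b ∈ Ω) →
      ∀ p : Polynomial ℂ,
        (∀ lam : ℂ, ‖lam‖ = 1 → u (a + lam • b) ≤ ((p.eval lam).re : EReal)) →
        ∀ lam : ℂ, ‖lam‖ < 1 → u (a + lam • b) ≤ ((p.eval lam).re : EReal)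

/-- A set `P ⊆ ℂⁿ` is *pluripolar* if it is contained in the `-∞`-locus of a
plurisubharmonic function (on all of the space) which is not identically `-∞`.
For `E = ℂ` this is the notion of a *polar* set. -/
def Pluripolar {E : Type*} [NormedAddCommGroup E] [NormedSpace ℂ E] (P : Set E) : Prop :=
  ∃ u : E → EReal, PlurisubharmonicOn u Set.univ ∧ (∃ z, u z ≠ ⊥) ∧ ∀ z ∈ P, u z = ⊥

/-- The relative extremal function `h_{A,Ω}(z) = sup { u(z) : u psh on Ω, u ≤ 1 on Ω, u ≤ 0 on A }`
(the supremum being taken over real-valued plurisubharmonic functions). -/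
noncomputable def relExtremal {E : Type*} [NormedAddCommGroup E] [NormedSpace ℂ E]
    (A Ω : Set E) (z : E) : ℝ :=
  sSup { t : ℝ | ∃ u : E → ℝ,
    PlurisubharmonicOn (fun x => ((u x : ℝ) : EReal)) Ω ∧
    (∀ x ∈ Ω, u x ≤ 1) ∧ (∀ x ∈ A, u x ≤ 0) ∧ t = u z }

/-- The upper semicontinuous regularization `h*_{A,Ω}` of the relative extremal function:
`h*_{A,Ω}(z) = limsup_{Ω ∋ w → z} h_{A,Ω}(w)`. -/
noncomputable def relExtremalStar {E : Type*} [NormedAddCommGroup E] [NormedSpace ℂ E]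
    (A Ω : Set E) (z : E) : ℝ :=
  Filter.limsup (relExtremal A Ω) (nhdsWithin z Ω)

/-- `ω_{A,Ω} = lim_k h*_{A ∩ Ω_k, Ω_k}` for an exhaustion `(Ω_k)` of `Ω` by relatively compact
open subsets; since these numbers decrease as the subset grows, the limit (independent of the
exhaustion) equals the infimum over all relatively compact open subsets `K ⊆ Ω` containing the
point. -/
noncomputable def omegaExtr {E : Type*} [NormedAddCommGroup E] [NormedSpace ℂ E]
    (A Ω : Set E) (z : E) : ℝ :=
  sInf { t : ℝ | ∃ K : Set E, IsOpen K ∧ IsCompact (closure K) ∧ closure K ⊆ Ω ∧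
    z ∈ K ∧ t = relExtremalStar (A ∩ K) K z }

/-- `A` is *locally pluriregular* if `h*_{A ∩ Ω, Ω}(a) = 0` for every `a ∈ A` and every open
neighborhood `Ω` of `a`.  For subsets of `ℂ` one says *locally regular*. -/
def LocallyPluriregular {E : Type*} [NormedAddCommGroup E] [NormedSpace ℂ E]
    (A : Set E) : Prop :=
  ∀ a ∈ A, ∀ Ω : Set E, IsOpen Ω → a ∈ Ω → relExtremalStar (A ∩ Ω) Ω a = 0

/-- `M` is an *analytic subset* of the open set `U` if, locally on `U`, it is the common
zero set of a family of holomorphic functions. -/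
def IsAnalyticSubset {E : Type*} [NormedAddCommGroup E] [NormedSpace ℂ E]
    (U M : Set E) : Prop :=
  M ⊆ U ∧ ∀ p ∈ U, ∃ V : Set E, IsOpen V ∧ p ∈ V ∧ V ⊆ U ∧
    ∃ (ι : Type) (g : ι → E → ℂ), (∀ i, DifferentiableOn ℂ (g i) V) ∧
      M ∩ V = {x ∈ V | ∀ i, g i x = 0}

/-- An analytic subset `M` of `U` is *pure 1-codimensional* (for subsets of `ℂ²`,
*pure 1-dimensional*) if near each of its points it is the zero set of a single holomorphic
function which does not vanish identically (on a connected neighborhood). -/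
def IsPureCodimOneAnalyticSubset {E : Type*} [NormedAddCommGroup E] [NormedSpace ℂ E]
    (U M : Set E) : Prop :=
  IsAnalyticSubset U M ∧ ∀ p ∈ M, ∃ V : Set E, IsOpen V ∧ IsPreconnected V ∧ p ∈ V ∧ V ⊆ U ∧
    ∃ g : E → ℂ, DifferentiableOn ℂ g V ∧ (∃ x ∈ V, g x ≠ 0) ∧ M ∩ V = {x ∈ V | g x = 0}


/-!
`ω_{A,D}` is upper semicontinuous, vanishes on the locally pluriregular set `A`, and is `< 1` on
the domain `D`: on a connected relatively compact `K ⋐ D` joining a point to `A`, the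
plurisubharmonic function `h*_{A∩K,K}` cannot attain its maximum `1` without being constant.
Hence `X̂` is open and contains the cross `𝕏(D,A;G,B)`, which is connected. A point `(z,w)` of
`X̂` is joined to the cross by `S × {w}`, where `S` is the component through `z` of the sublevel
set `{h*_{A∩K,K} < 1 - ω_{B,G}(w)}`; `S` meets `A`, since otherwise raising `h*_{A∩K,K}` to that
level on `S` would give a competitor for `h_{A∩K,K}` exceeding `h*_{A∩K,K}` at `z`.

As plurisubharmonicity is defined through polynomial majorants on discs, the maximum principle
rests on a polynomial whose real part is `≥ 1` on the unit circle away from `1`, `≥ 1 - δ` near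
`1`, and `< 1` at `0`.
-/

open Topology Polynomial

section MinimumPrinciple

theorem Complex.le_re_of_forall_mem_frontier_le_re {E : Type*} [NormedAddCommGroup E]
    [NormedSpace ℂ E] [Nontrivial E] {U : Set E} (hU : Bornology.IsBounded U) {f : E → ℂ}
    (hf : DiffContOnCl ℂ f U) {c : ℝ} (hc : ∀ z ∈ frontier U, c ≤ (f z).re) {z : E}
    (hz : z ∈ closure U) : c ≤ (f z).re := by
  -- the minimum principle for `Re f` is the maximum principle for `‖exp (-f)‖ = exp (-Re f)`
  have hexp : DiffContOnCl ℂ (fun w => Complex.exp (-f w)) U :=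
    (Complex.differentiable_exp.comp_diffContOnCl hf.neg)
  have := Complex.norm_le_of_forall_mem_frontier_norm_le hU hexp
    (C := Real.exp (-c)) (fun w hw => by simpa [Complex.norm_exp] using hc w hw) hz
  simpa [Complex.norm_exp] using this

theorem Polynomial.le_re_eval_of_forall_norm_eq_one (p : ℂ[X]) {c : ℝ}
    (hc : ∀ μ : ℂ, ‖μ‖ = 1 → c ≤ (p.eval μ).re) {z : ℂ} (hz : ‖z‖ < 1) :
    c ≤ (p.eval z).re := by
  refine Complex.le_re_of_forall_mem_frontier_le_re isBounded_ball
    p.differentiable.diffContOnCl (fun μ hμ => hc μ ?_) (subset_closure (s := ball 0 1) ?_)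
  · simpa [frontier_ball (0 : ℂ) one_ne_zero] using hμ
  · simpa using hz

end MinimumPrinciple

section Plurisubharmonic

variable {E : Type*} [NormedAddCommGroup E] [NormedSpace ℂ E]

theorem plurisubharmonicOn_coe_iff {u : E → ℝ} {Ω : Set E} :
    PlurisubharmonicOn (fun x => (u x : EReal)) Ω ↔ UpperSemicontinuousOn u Ω ∧
      ∀ a b : E, (∀ lam : ℂ, ‖lam‖ ≤ 1 → a + lam • b ∈ Ω) → ∀ p : ℂ[X],
        (∀ lam : ℂ, ‖lam‖ = 1 → u (a + lam • b) ≤ (p.eval lam).re) →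
        ∀ lam : ℂ, ‖lam‖ < 1 → u (a + lam • b) ≤ (p.eval lam).re := by
  have husc : UpperSemicontinuousOn (fun x => (u x : EReal)) Ω ↔ UpperSemicontinuousOn u Ω := by
    refine ⟨fun h x hx y hy => ?_, fun h => continuous_coe_real_ereal.comp_upperSemicontinuousOn h
      EReal.coe_strictMono.monotone⟩
    filter_upwards [h x hx y (EReal.coe_lt_coe_iff.2 hy)] with x' hx'
    exact EReal.coe_lt_coe_iff.1 hx'
  simp only [PlurisubharmonicOn, husc, EReal.coe_le_coe_iff]

theorem plurisubharmonicOn_const (c : ℝ) (Ω : Set E) :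
    PlurisubharmonicOn (fun _ : E => (c : EReal)) Ω :=
  plurisubharmonicOn_coe_iff.2 ⟨upperSemicontinuousOn_const, fun _ _ _ p hp _ hlam =>
    p.le_re_eval_of_forall_norm_eq_one hp hlam⟩

theorem nonempty_of_not_pluripolar {P : Set E} (hP : ¬ Pluripolar P) : P.Nonempty := by
  refine nonempty_iff_ne_empty.2 fun h => hP ?_
  exact ⟨fun _ => ((0 : ℝ) : EReal), plurisubharmonicOn_const 0 univ, ⟨0, EReal.coe_ne_bot 0⟩,
    fun _ hz => (h ▸ hz : _ ∈ (∅ : Set E)).elim⟩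

end Plurisubharmonic

section GeneralTopology

variable {α : Type*} [TopologicalSpace α]

theorem UpperSemicontinuousOn.isOpen_sep_lt {s : Set α} {f : α → ℝ}
    (hf : UpperSemicontinuousOn f s) (hs : IsOpen s) (c : ℝ) : IsOpen {x ∈ s | f x < c} := by
  obtain ⟨u, hu, hsu⟩ := upperSemicontinuousOn_iff_preimage_Iio.1 hf c
  exact (show {x ∈ s | f x < c} = s ∩ u from hsu) ▸ hs.inter hu

theorem IsPreconnected.of_forall_exists_isPreconnected_inter {s C : Set α} (hC : IsPreconnected C)
    (hCs : C ⊆ s) (hCne : C.Nonempty)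
    (h : ∀ x ∈ s, ∃ t ⊆ s, IsPreconnected t ∧ x ∈ t ∧ (t ∩ C).Nonempty) : IsPreconnected s := by
  obtain ⟨c, hc⟩ := hCne
  refine isPreconnected_of_forall c fun x hx => ?_
  obtain ⟨t, hts, ht, hxt, htC⟩ := h x hx
  exact ⟨t ∪ C, union_subset hts hCs, .inr hc, .inl hxt, ht.union' htC hC⟩

theorem mem_connectedComponentIn_of_mem_closure {F : Set α} {z x : α}
    (hx : x ∈ closure (connectedComponentIn F z)) (hxF : x ∈ F) :
    x ∈ connectedComponentIn F z := by
  have hz : z ∈ F := connectedComponentIn_nonempty_iff.1 (closure_nonempty_iff.1 ⟨x, hx⟩)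
  have hsub : insert x (connectedComponentIn F z) ⊆ connectedComponentIn F z := by
    refine (isPreconnected_connectedComponentIn.subset_closure (subset_insert _ _)
      (insert_subset hx subset_closure)).subset_connectedComponentIn
      (mem_insert_of_mem _ (mem_connectedComponentIn hz))
      (insert_subset hxF (connectedComponentIn_subset _ _))
  exact hsub (mem_insert x _)

theorem IsOpen.exists_isPreconnected_isCompact_closure [LocallyCompactSpace α] [RegularSpace α]
    [LocallyPathConnectedSpace α] {D : Set α} (hD : IsOpen D) (hDc : IsPreconnected D)
    {x y : α} (hx : x ∈ D) (hy : y ∈ D) :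
    ∃ K : Set α, IsOpen K ∧ IsPreconnected K ∧ IsCompact (closure K) ∧ closure K ⊆ D ∧
      x ∈ K ∧ y ∈ K := by
  obtain ⟨γ, hγ⟩ := (hD.isConnected_iff_isPathConnected.1 ⟨⟨x, hx⟩, hDc⟩).joinedIn x hx y hy
  obtain ⟨V, hV, hγV, hVD, hVc⟩ := exists_open_between_and_isCompact_closure
    (isCompact_range γ.continuous) hD (range_subset_iff.2 hγ)
  have hxV : x ∈ V := hγV ⟨0, γ.source⟩
  have hcl : closure (connectedComponentIn V x) ⊆ closure V :=
    closure_mono (connectedComponentIn_subset V x)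
  refine ⟨connectedComponentIn V x, hV.connectedComponentIn, isPreconnected_connectedComponentIn,
    hVc.of_isClosed_subset isClosed_closure hcl, hcl.trans hVD, mem_connectedComponentIn hxV, ?_⟩
  exact (isPreconnected_range γ.continuous).subset_connectedComponentIn ⟨0, γ.source⟩ hγV
    ⟨1, γ.target⟩

section PiecewiseMax

variable {v : α → ℝ} {K U : Set α} [DecidablePred (· ∈ U)] {c : ℝ}

theorem le_piecewise_max_const_of_mem_closure (hfr : ∀ x ∈ K, x ∈ closure U → x ∉ U → c ≤ v x)
    {x : α} (hxK : x ∈ K) (hxU : x ∈ closure U) : c ≤ U.piecewise (fun y => max (v y) c) v x := by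
  by_cases hx : x ∈ U
  · simp [hx]
  · simpa [hx] using hfr x hxK hxU hx

theorem UpperSemicontinuousOn.piecewise_max_const (hv : UpperSemicontinuousOn v K)
    (hfr : ∀ x ∈ K, x ∈ closure U → x ∉ U → c ≤ v x) :
    UpperSemicontinuousOn (U.piecewise (fun y => max (v y) c) v) K := by
  have hvg : ∀ y, v y ≤ U.piecewise (fun y => max (v y) c) v y := fun y => by
    by_cases hy : y ∈ U <;> simp [hy]
  have hgmax : ∀ y, U.piecewise (fun y => max (v y) c) v y ≤ max (v y) c := fun y => by
    by_cases hy : y ∈ U <;> simp [hy]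
  intro x hxK t ht
  by_cases hxU : x ∈ closure U
  · have hct : c < t := (le_piecewise_max_const_of_mem_closure hfr hxK hxU).trans_lt ht
    filter_upwards [hv x hxK t ((hvg x).trans_lt ht)] with y hy
    exact (hgmax y).trans_lt (max_lt hy hct)
  · have hout : (closure U)ᶜ ∈ 𝓝[K] x :=
      nhdsWithin_le_nhds (isClosed_closure.isOpen_compl.mem_nhds hxU)
    rw [piecewise_eq_of_notMem _ _ _ fun h => hxU (subset_closure h)] at ht
    filter_upwards [hv x hxK t ht, hout] with y hy hyU
    rwa [piecewise_eq_of_notMem _ _ _ fun h => hyU (subset_closure h)]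

end PiecewiseMax

end GeneralTopology

section ArcPolynomial

open Finset

-- `cos (θ/2)^(2k) = 4⁻ᵏ ∑_d (2k choose d) cos ((d - k) θ)`, and folding the negative frequencies
-- `d < k` onto `k - d` turns this trigonometric polynomial into the real part of a polynomial.
noncomputable def cosPowKernel (k : ℕ) : ℂ[X] :=
  ∑ d ∈ range (2 * k + 1), C (((4 : ℝ)⁻¹ ^ k * (2 * k).choose d : ℝ) : ℂ) * X ^ Nat.dist d k

theorem Real.two_mul_cos_half_pow (k : ℕ) (θ : ℝ) :
    (2 * Real.cos (θ / 2)) ^ (2 * k) =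
      ∑ d ∈ range (2 * k + 1), ((2 * k).choose d : ℝ) * Real.cos (((d : ℝ) - k) * θ) := by
  have hc : ((2 * Real.cos (θ / 2)) ^ (2 * k) : ℝ) =
      (((2 * Complex.cos (↑(θ / 2))) ^ (2 * k) : ℂ)).re := by
    rw [← Complex.ofReal_cos]; norm_cast
  rw [hc, Complex.two_cos, add_pow, Complex.re_sum]
  refine sum_congr rfl fun d hd => ?_
  have hexp : Complex.exp (↑(θ / 2) * Complex.I) ^ d *
      Complex.exp (-↑(θ / 2) * Complex.I) ^ (2 * k - d) =
      Complex.exp (↑(((d : ℝ) - k) * θ) * Complex.I) := by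
    rw [← Complex.exp_nat_mul, ← Complex.exp_nat_mul, ← Complex.exp_add]
    congr 1
    push_cast [Nat.cast_sub (mem_range_succ_iff.1 hd)]
    ring
  rw [hexp, mul_comm, ← Complex.ofReal_natCast, Complex.re_ofReal_mul, Complex.exp_ofReal_mul_I_re]

theorem re_eval_cosPowKernel_exp (k : ℕ) (θ : ℝ) :
    ((cosPowKernel k).eval (Complex.exp (θ * Complex.I))).re = Real.cos (θ / 2) ^ (2 * k) := by
  have hterm : ∀ d : ℕ, (Complex.exp (θ * Complex.I) ^ Nat.dist d k).re =
      Real.cos (((d : ℝ) - k) * θ) := by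
    intro d
    rw [← Complex.exp_nat_mul, ← mul_assoc, ← Complex.ofReal_natCast, ← Complex.ofReal_mul,
      Complex.exp_ofReal_mul_I_re]
    rcases le_total d k with h | h
    · rw [Nat.dist_eq_sub_of_le h, Nat.cast_sub h, ← Real.cos_neg]; ring_nf
    · rw [Nat.dist_eq_sub_of_le_right h, Nat.cast_sub h]
  have hpow : Real.cos (θ / 2) ^ (2 * k) = (4 : ℝ)⁻¹ ^ k * (2 * Real.cos (θ / 2)) ^ (2 * k) := by
    rw [mul_pow, pow_mul, pow_mul, ← mul_assoc, ← mul_pow]; norm_num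
  simp only [cosPowKernel, eval_finsetSum, eval_mul, eval_C, eval_pow, eval_X, Complex.re_sum,
    Complex.re_ofReal_mul, hterm, hpow, Real.two_mul_cos_half_pow, mul_sum, mul_assoc]

theorem re_eval_cosPowKernel_zero (k : ℕ) :
    ((cosPowKernel k).eval 0).re = (4 : ℝ)⁻¹ ^ k * (2 * k).choose k := by
  rw [cosPowKernel, eval_finsetSum, sum_eq_single k]
  · rw [Nat.dist_self, pow_zero, mul_one, eval_C, Complex.ofReal_re]
  · intro d _ hdk
    rw [eval_C_mul, eval_X_pow, zero_pow (fun h => hdk (Nat.eq_of_dist_eq_zero h)), mul_zero]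
  · intro hk
    exact absurd (Finset.mem_range.2 (by omega)) hk

theorem re_eval_cosPowKernel {k : ℕ} {lam : ℂ} (hlam : ‖lam‖ = 1) :
    ((cosPowKernel k).eval lam).re = ((1 + lam.re) / 2) ^ k := by
  have hexp : lam = Complex.exp (lam.arg * Complex.I) := by
    simpa [hlam] using (Complex.norm_mul_exp_arg_mul_I lam).symm
  have hcos : Real.cos (lam.arg / 2) ^ 2 = (1 + lam.re) / 2 := by
    rw [Real.cos_sq, mul_div_cancel₀ _ two_ne_zero,
      Complex.cos_arg (norm_ne_zero_iff.1 (hlam.trans_ne one_ne_zero)), hlam, div_one]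
    ring
  rw [hexp, re_eval_cosPowKernel_exp, pow_mul, hcos, ← hexp]

theorem exists_two_mul_add_one_mul_pow_lt_one {ρ : ℝ} (h0 : 0 ≤ ρ) (h1 : ρ < 1) :
    ∃ k : ℕ, (2 * k + 1) * ρ ^ k < 1 := by
  have hρ : |ρ| < 1 := by rwa [abs_of_nonneg h0]
  have hlim : Tendsto (fun k : ℕ => 2 * ((k : ℝ) ^ 1 * ρ ^ k) + ρ ^ k) atTop (𝓝 0) := by
    simpa using ((tendsto_pow_const_mul_const_pow_of_abs_lt_one 1 hρ).const_mul 2).add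
      (tendsto_pow_atTop_nhds_zero_of_abs_lt_one hρ)
  obtain ⟨k, hk⟩ := (hlim.eventually_lt_const one_pos).exists
  exact ⟨k, by simpa [add_mul, mul_assoc] using hk⟩

theorem Complex.norm_sub_one_sq_of_norm_eq_one {lam : ℂ} (hlam : ‖lam‖ = 1) :
    ‖lam - 1‖ ^ 2 = 2 - 2 * lam.re := by
  have h := Complex.sq_norm lam
  rw [hlam, Complex.normSq_apply] at h
  rw [Complex.sq_norm, Complex.normSq_apply, Complex.sub_re, Complex.sub_im, Complex.one_re,
    Complex.one_im]
  nlinarith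

theorem exists_polynomial_re_ge_one_off_arc {ε δ : ℝ} (hε : 0 < ε) (hδ : 0 < δ) :
    ∃ p : ℂ[X], (∀ lam : ℂ, ‖lam‖ = 1 → 1 - δ ≤ (p.eval lam).re) ∧
      (∀ lam : ℂ, ‖lam‖ = 1 → ε ≤ ‖lam - 1‖ → 1 ≤ (p.eval lam).re) ∧ (p.eval 0).re < 1 := by
  set ρ : ℝ := 1 - min ε 1 ^ 2 / 4 with hρ
  have hρ0 : 0 ≤ ρ := by nlinarith [min_le_right ε 1, lt_min hε one_pos]
  have hρ1 : ρ < 1 := by nlinarith [lt_min hε one_pos]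
  obtain ⟨k, hk⟩ := exists_two_mul_add_one_mul_pow_lt_one hρ0 hρ1
  have hcentral : 1 / (2 * k + 1 : ℝ) ≤ (4 : ℝ)⁻¹ ^ k * (2 * k).choose k := by
    have := Nat.four_pow_le_two_mul_add_one_mul_central_binom k
    rw [div_le_iff₀ (by positivity), inv_pow, mul_assoc, inv_mul_eq_div,
      le_div_iff₀ (by positivity), one_mul]
    exact_mod_cast (by linarith : 4 ^ k ≤ (2 * k).choose k * (2 * k + 1))
  have hre : ∀ z : ℂ, ((C ((1 + δ * ρ ^ k : ℝ) : ℂ) - C (δ : ℂ) * cosPowKernel k).eval z).re =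
      1 + δ * ρ ^ k - δ * ((cosPowKernel k).eval z).re := by
    intro z
    rw [eval_sub, eval_mul, eval_C, eval_C, Complex.sub_re, Complex.re_ofReal_mul,
      Complex.ofReal_re]
  have hs : ∀ lam : ℂ, ‖lam‖ = 1 → 0 ≤ (1 + lam.re) / 2 ∧ (1 + lam.re) / 2 ≤ 1 := fun lam hlam =>
    have := (abs_le.1 ((Complex.abs_re_le_norm lam).trans hlam.le)); ⟨by linarith, by linarith⟩
  -- on the circle `Re p = 1 + δ ρᵏ - δ ((1 + Re lam) / 2)ᵏ`, and at `0` the kernel's value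
  -- `4⁻ᵏ (2k choose k) ≥ 1 / (2k + 1)` exceeds `ρᵏ`
  refine ⟨C ((1 + δ * ρ ^ k : ℝ) : ℂ) - C (δ : ℂ) * cosPowKernel k, fun lam hlam => ?_,
    fun lam hlam hfar => ?_, ?_⟩
  · rw [hre, re_eval_cosPowKernel hlam]
    have := pow_le_one₀ (hs lam hlam).1 (hs lam hlam).2 (n := k)
    nlinarith [pow_nonneg hρ0 k]
  · rw [hre, re_eval_cosPowKernel hlam]
    have hfar' : min ε 1 ^ 2 ≤ 2 - 2 * lam.re := by
      rw [← Complex.norm_sub_one_sq_of_norm_eq_one hlam]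
      exact pow_le_pow_left₀ (le_min hε.le zero_le_one) ((min_le_left _ _).trans hfar) 2
    have := pow_le_pow_left₀ (hs lam hlam).1 (by linarith : (1 + lam.re) / 2 ≤ ρ) k
    nlinarith
  · rw [hre, re_eval_cosPowKernel_zero]
    have : ρ ^ k < 1 / (2 * k + 1) := by rw [lt_div_iff₀ (by positivity)]; linarith
    nlinarith

end ArcPolynomial

section MaximumPrinciple

variable {E : Type*} [NormedAddCommGroup E] [NormedSpace ℂ E] {v : E → ℝ} {K : Set E}

theorem PlurisubharmonicOn.eqOn_ball_of_isMaxOn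
    (hv : PlurisubharmonicOn (fun x => (v x : EReal)) K) (hK : IsOpen K) {x : E}
    (hmax : IsMaxOn v K x) {r : ℝ} (hr : ball x r ⊆ K) :
    EqOn v (Function.const E (v x)) (ball x r) := by
  obtain ⟨husc, hsub⟩ := plurisubharmonicOn_coe_iff.1 hv
  intro y hy
  by_contra hne
  have hyx : v y < v x := (hmax (hr hy)).lt_of_ne hne
  set δ := (v x - v y) / 2
  have hδ : 0 < δ := by simp only [δ]; linarith
  set b := y - x
  have hline : Continuous fun lam : ℂ => x + lam • b := by fun_prop
  -- `v < v x - δ` on an arc of the circle `x + lam • b` around `lam = 1`, where the line passes `y`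
  obtain ⟨ε, hε, harc⟩ : ∃ ε > 0, ∀ lam : ℂ, dist lam 1 < ε → v (x + lam • b) < v x - δ := by
    have hnear : ∀ᶠ y' in 𝓝 y, v y' < v x - δ := by
      rw [← hK.nhdsWithin_eq (hr hy)]
      exact husc y (hr hy) _ (by simp only [δ]; linarith)
    have hy1 : x + (1 : ℂ) • b = y := by simp [b]
    exact Metric.eventually_nhds_iff.1 (hline.tendsto 1 (hy1 ▸ hnear))
  obtain ⟨p, hp, hpfar, hp0⟩ := exists_polynomial_re_ge_one_off_arc hε hδ
  have hdisc : ∀ lam : ℂ, ‖lam‖ ≤ 1 → x + lam • b ∈ K := fun lam hlam => hr <| by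
    rw [mem_ball, dist_eq_norm, add_sub_cancel_left, norm_smul]
    exact (mul_le_of_le_one_left (norm_nonneg _) hlam).trans_lt (mem_ball_iff_norm.1 hy)
  have hcirc : ∀ lam : ℂ, ‖lam‖ = 1 →
      v (x + lam • b) ≤ ((C ((v x - 1 : ℝ) : ℂ) + p).eval lam).re := by
    intro lam hlam
    rw [eval_add, eval_C, Complex.add_re, Complex.ofReal_re]
    rcases lt_or_ge (dist lam 1) ε with hclose | hfar
    · linarith [harc lam hclose, hp lam hlam]
    · have hvx : v (x + lam • b) ≤ v x := hmax (hdisc lam hlam.le)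
      linarith [hpfar lam hlam (by rwa [← dist_eq_norm])]
  have := hsub x b hdisc _ hcirc 0 (by simp)
  rw [zero_smul, add_zero, eval_add, eval_C, Complex.add_re, Complex.ofReal_re] at this
  linarith

theorem PlurisubharmonicOn.eqOn_of_isPreconnected_of_isMaxOn
    (hv : PlurisubharmonicOn (fun x => (v x : EReal)) K) (hK : IsOpen K) (hKc : IsPreconnected K)
    {x₀ : E} (hx₀ : x₀ ∈ K) (hmax : IsMaxOn v K x₀) :
    EqOn v (Function.const E (v x₀)) K := by
  obtain ⟨w, hw, hKw⟩ := upperSemicontinuousOn_iff_preimage_Iio.1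
    (plurisubharmonicOn_coe_iff.1 hv).1 (v x₀)
  have hmax_open : IsOpen {x ∈ K | v x = v x₀} := by
    refine isOpen_iff_forall_mem_open.2 fun x hx => ?_
    obtain ⟨r, hr, hball⟩ := isOpen_iff.1 hK x hx.1
    have hmax_x : IsMaxOn v K x := fun y hy => hx.2 ▸ hmax hy
    exact ⟨ball x r, fun y hy => ⟨hball hy,
      (hv.eqOn_ball_of_isMaxOn hK hmax_x hball hy).trans hx.2⟩, isOpen_ball, mem_ball_self hr⟩
  have hsub := hKc.subset_left_of_subset_union hmax_open (hw.inter hK)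
    (disjoint_left.2 fun x hx hx' => by
      have : x ∈ K ∩ v ⁻¹' Iio (v x₀) := hKw ▸ ⟨hx'.2, hx'.1⟩
      exact this.2.ne hx.2)
    (fun x hx => (hmax hx).eq_or_lt.elim (fun h => .inl ⟨hx, h⟩)
      fun h => .inr ⟨(hKw.subset ⟨hx, h⟩).2, hx⟩)
    ⟨x₀, hx₀, hx₀, rfl⟩
  exact fun x hx => (hsub hx).2

end MaximumPrinciple

section RelativeExtremal

variable {E : Type*} [NormedAddCommGroup E] [NormedSpace ℂ E] {B K : Set E} {z : E}

theorem relExtremal_nonneg (B K : Set E) (z : E) : 0 ≤ relExtremal B K z := by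
  by_cases hb : BddAbove {t : ℝ | ∃ u : E → ℝ, PlurisubharmonicOn (fun x => (u x : EReal)) K ∧
      (∀ x ∈ K, u x ≤ 1) ∧ (∀ x ∈ B, u x ≤ 0) ∧ t = u z}
  · exact le_csSup hb ⟨fun _ => 0, plurisubharmonicOn_const 0 K, fun _ _ => zero_le_one,
      fun _ _ => le_rfl, rfl⟩
  · exact (Real.sSup_of_not_bddAbove hb).ge

theorem relExtremal_le {c : ℝ} (hc : 0 ≤ c)
    (h : ∀ u : E → ℝ, PlurisubharmonicOn (fun x => (u x : EReal)) K →
      (∀ x ∈ K, u x ≤ 1) → (∀ x ∈ B, u x ≤ 0) → u z ≤ c) :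
    relExtremal B K z ≤ c :=
  Real.sSup_le (by rintro t ⟨u, hu, h1, h0, rfl⟩; exact h u hu h1 h0) hc

theorem relExtremal_le_one (hz : z ∈ K) : relExtremal B K z ≤ 1 :=
  relExtremal_le zero_le_one fun _ _ h1 _ => h1 z hz

theorem le_relExtremal {u : E → ℝ} (hu : PlurisubharmonicOn (fun x => (u x : EReal)) K)
    (h1 : ∀ x ∈ K, u x ≤ 1) (h0 : ∀ x ∈ B, u x ≤ 0) (hz : z ∈ K) :
    u z ≤ relExtremal B K z :=
  le_csSup ⟨1, by rintro t ⟨v, -, hv1, -, rfl⟩; exact hv1 z hz⟩ ⟨u, hu, h1, h0, rfl⟩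

theorem relExtremalStar_eq_limsup_nhds (hK : IsOpen K) (hz : z ∈ K) :
    relExtremalStar B K z = limsup (relExtremal B K) (𝓝 z) := by
  rw [relExtremalStar, hK.nhdsWithin_eq hz]

theorem eventually_relExtremal_le_one (hK : IsOpen K) (hz : z ∈ K) :
    ∀ᶠ y in 𝓝 z, relExtremal B K y ≤ 1 :=
  eventually_of_mem (hK.mem_nhds hz) fun _ => relExtremal_le_one

theorem relExtremalStar_le_of_eventually (hK : IsOpen K) (hz : z ∈ K) {t : ℝ}
    (h : ∀ᶠ y in 𝓝 z, relExtremal B K y ≤ t) : relExtremalStar B K z ≤ t := by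
  rw [relExtremalStar_eq_limsup_nhds hK hz]
  exact limsup_le_of_le (isBoundedUnder_of_eventually_ge
    (Eventually.of_forall (relExtremal_nonneg B K))).isCoboundedUnder_le h

theorem eventually_relExtremal_lt (hK : IsOpen K) (hz : z ∈ K) {c : ℝ}
    (h : relExtremalStar B K z < c) : ∀ᶠ y in 𝓝 z, relExtremal B K y < c := by
  rw [relExtremalStar_eq_limsup_nhds hK hz] at h
  exact eventually_lt_of_limsup_lt h
    (isBoundedUnder_of_eventually_le (eventually_relExtremal_le_one hK hz))

theorem relExtremal_le_relExtremalStar (hK : IsOpen K) (hz : z ∈ K) :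
    relExtremal B K z ≤ relExtremalStar B K z := by
  rw [relExtremalStar_eq_limsup_nhds hK hz]
  exact le_limsup_of_le (isBoundedUnder_of_eventually_le (eventually_relExtremal_le_one hK hz))
    fun t ht => ht.self_of_nhds

theorem relExtremalStar_nonneg (hK : IsOpen K) (hz : z ∈ K) : 0 ≤ relExtremalStar B K z :=
  (relExtremal_nonneg B K z).trans (relExtremal_le_relExtremalStar hK hz)

theorem relExtremalStar_le_one (hK : IsOpen K) (hz : z ∈ K) : relExtremalStar B K z ≤ 1 :=
  relExtremalStar_le_of_eventually hK hz (eventually_relExtremal_le_one hK hz)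

theorem eventually_relExtremalStar_lt (hK : IsOpen K) (hz : z ∈ K) {c : ℝ}
    (h : relExtremalStar B K z < c) : ∀ᶠ y in 𝓝 z, relExtremalStar B K y < c := by
  obtain ⟨c', hzc', hc'c⟩ := exists_between h
  filter_upwards [(eventually_relExtremal_lt hK hz hzc').eventually_nhds,
    hK.mem_nhds hz] with y hy hyK
  exact (relExtremalStar_le_of_eventually hK hyK (hy.mono fun _ => le_of_lt)).trans_lt hc'c

theorem upperSemicontinuousOn_relExtremalStar (hK : IsOpen K) :
    UpperSemicontinuousOn (relExtremalStar B K) K := fun _ hz _ h =>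
  nhdsWithin_le_nhds (eventually_relExtremalStar_lt hK hz h)

end RelativeExtremal

section RelativeExtremalPlurisubharmonic

variable {E : Type*} [NormedAddCommGroup E] [NormedSpace ℂ E] {B K : Set E}

theorem IsOpen.eventually_forall_closedBall_add_smul_mem (hK : IsOpen K) {a b : E}
    (hdisc : ∀ μ : ℂ, ‖μ‖ ≤ 1 → a + μ • b ∈ K) :
    ∀ᶠ y in 𝓝 a, ∀ μ ∈ closedBall (0 : ℂ) 1, y + μ • b ∈ K :=
  (isCompact_closedBall 0 1).eventually_forall_of_forall_eventually fun μ hμ => by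
    have hline : ContinuousAt (fun q : E × ℂ => q.1 + q.2 • b) (a, μ) := by fun_prop
    exact hline.eventually (hK.mem_nhds (hdisc μ (by simpa using hμ)))

theorem eventually_forall_sphere_relExtremal_lt (hK : IsOpen K) {a b : E}
    (hdisc : ∀ μ : ℂ, ‖μ‖ ≤ 1 → a + μ • b ∈ K) {p : ℂ[X]}
    (hcirc : ∀ μ : ℂ, ‖μ‖ = 1 → relExtremalStar B K (a + μ • b) ≤ (p.eval μ).re)
    {ε : ℝ} (hε : 0 < ε) :
    ∀ᶠ y in 𝓝 a, ∀ μ ∈ sphere (0 : ℂ) 1, relExtremal B K (y + μ • b) < (p.eval μ).re + ε := by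
  refine (isCompact_sphere 0 1).eventually_forall_of_forall_eventually fun μ hμ => ?_
  have hμ1 : ‖μ‖ = 1 := by simpa using hμ
  have hline : ContinuousAt (fun q : E × ℂ => q.1 + q.2 • b) (a, μ) := by fun_prop
  have hre : ContinuousAt (fun q : E × ℂ => (p.eval q.2).re) (a, μ) :=
    (Complex.continuous_re.comp (p.continuous.comp continuous_snd)).continuousAt
  filter_upwards [hline.eventually (eventually_relExtremal_lt hK (hdisc μ hμ1.le)
      ((hcirc μ hμ1).trans_lt (lt_add_of_pos_right _ (half_pos hε)))),
    hre.eventually (lt_mem_nhds (sub_lt_self (p.eval μ).re (half_pos hε)))]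
    with q hq hpq
  linarith

theorem plurisubharmonicOn_relExtremalStar (hK : IsOpen K) :
    PlurisubharmonicOn (fun x => (relExtremalStar B K x : EReal)) K := by
  refine plurisubharmonicOn_coe_iff.2 ⟨upperSemicontinuousOn_relExtremalStar hK, ?_⟩
  intro a b hdisc p hcirc lam₀ hlam₀
  have hp₀ : 0 ≤ (p.eval lam₀).re := p.le_re_eval_of_forall_norm_eq_one
    (fun μ hμ => (relExtremalStar_nonneg hK (hdisc μ hμ.le)).trans (hcirc μ hμ)) hlam₀
  refine le_of_forall_pos_le_add fun ε hε => ?_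
  -- every competitor is `≤ Re p + ε` on the circles through points near `a`, hence inside them
  have hnear : ∀ᶠ y in 𝓝 a, relExtremal B K (y + lam₀ • b) ≤ (p.eval lam₀).re + ε := by
    filter_upwards [hK.eventually_forall_closedBall_add_smul_mem hdisc,
      eventually_forall_sphere_relExtremal_lt hK hdisc hcirc hε] with y hyK hyh
    refine relExtremal_le (by positivity) fun u hu hu1 hu0 => ?_
    have hreC : ∀ μ : ℂ, ((p + C (ε : ℂ)).eval μ).re = (p.eval μ).re + ε := fun μ => by
      rw [eval_add, eval_C, Complex.add_re, Complex.ofReal_re]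
    have hydisc : ∀ μ : ℂ, ‖μ‖ ≤ 1 → y + μ • b ∈ K := fun μ hμ => hyK μ (by simpa using hμ)
    have := (plurisubharmonicOn_coe_iff.1 hu).2 y b hydisc (p + C (ε : ℂ)) (fun μ hμ => by
      rw [hreC]
      exact (le_relExtremal hu hu1 hu0 (hydisc μ hμ.le)).trans (hyh μ (by simpa using hμ)).le)
      lam₀ hlam₀
    rwa [hreC] at this
  have hshift : Tendsto (fun x => x - lam₀ • b) (𝓝 (a + lam₀ • b)) (𝓝 a) := by
    simpa using (continuous_sub_right (lam₀ • b)).tendsto (a + lam₀ • b)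
  exact relExtremalStar_le_of_eventually hK (hdisc lam₀ hlam₀.le)
    ((hshift.eventually hnear).mono fun x hx => by simpa using hx)

end RelativeExtremalPlurisubharmonic

section Gluing

variable {E : Type*} [NormedAddCommGroup E] [NormedSpace ℂ E] {v : E → ℝ} {K U : Set E}
  [DecidablePred (· ∈ U)] {c : ℝ}

theorem PlurisubharmonicOn.piecewise_max_const (hv : PlurisubharmonicOn (fun x => (v x : EReal)) K)
    (hU : IsOpen U) (hfr : ∀ x ∈ K, x ∈ closure U → x ∉ U → c ≤ v x) :
    PlurisubharmonicOn (fun x => (U.piecewise (fun y => max (v y) c) v x : EReal)) K := by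
  obtain ⟨husc, hsub⟩ := plurisubharmonicOn_coe_iff.1 hv
  refine plurisubharmonicOn_coe_iff.2 ⟨husc.piecewise_max_const hfr, ?_⟩
  intro a b hdisc p hcirc lam₀ hlam₀
  set g := U.piecewise (fun y => max (v y) c) v
  have hvg : ∀ y, v y ≤ g y := fun y => by by_cases hy : y ∈ U <;> simp [g, hy]
  have hv_le : ∀ μ : ℂ, ‖μ‖ < 1 → v (a + μ • b) ≤ (p.eval μ).re :=
    hsub a b hdisc p fun μ hμ => (hvg _).trans (hcirc μ hμ)
  by_cases hin : a + lam₀ • b ∈ U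
  swap
  · simpa [g, hin] using hv_le lam₀ hlam₀
  -- on the part `Ω` of the disc mapped into `U`, the minimum principle gives `c ≤ Re p`
  have hline : Continuous fun μ : ℂ => a + μ • b := by fun_prop
  set Ω : Set ℂ := {μ | ‖μ‖ < 1 ∧ a + μ • b ∈ U}
  have hΩ : IsOpen Ω := (isOpen_lt continuous_norm continuous_const).inter (hU.preimage hline)
  have hΩcl : closure Ω ⊆ {μ | ‖μ‖ ≤ 1 ∧ a + μ • b ∈ closure U} :=
    closure_minimal (fun μ hμ => ⟨hμ.1.le, subset_closure hμ.2⟩)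
      ((isClosed_le continuous_norm continuous_const).inter (isClosed_closure.preimage hline))
  have hfrontier : ∀ μ ∈ frontier Ω, c ≤ (p.eval μ).re := by
    intro μ hμ
    rw [hΩ.frontier_eq] at hμ
    obtain ⟨hμ1, hμU⟩ := hΩcl hμ.1
    rcases hμ1.lt_or_eq with hμ1 | hμ1
    · have hnot : a + μ • b ∉ U := fun h => hμ.2 ⟨hμ1, h⟩
      exact (hfr _ (hdisc μ hμ1.le) hμU hnot).trans (hv_le μ hμ1)
    · exact (le_piecewise_max_const_of_mem_closure hfr (hdisc μ hμ1.le) hμU).trans (hcirc μ hμ1)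
  have hc := Complex.le_re_of_forall_mem_frontier_le_re
    ((isBounded_ball (x := (0 : ℂ)) (r := 1)).subset fun μ hμ => by simpa using hμ.1)
    p.differentiable.diffContOnCl hfrontier (subset_closure ⟨hlam₀, hin⟩)
  simpa [g, hin] using ⟨hv_le lam₀ hlam₀, hc⟩

end Gluing

section SublevelComponents

variable {E : Type*} [NormedAddCommGroup E] [NormedSpace ℂ E] {B K : Set E}

-- A component missing `B` would let us raise `h*_{B,K}` to `c` on it, producing a competitor
-- for `h_{B,K}` that exceeds `h*_{B,K}` at `z`.
theorem exists_mem_connectedComponentIn_sublevel_relExtremalStar (hK : IsOpen K)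
    (hB : ∀ x ∈ B, relExtremalStar B K x = 0) {c : ℝ} (hc : c ≤ 1) {z : E} (hz : z ∈ K)
    (hzc : relExtremalStar B K z < c) :
    ∃ b ∈ B, b ∈ connectedComponentIn {x ∈ K | relExtremalStar B K x < c} z := by
  classical
  by_contra! hmiss
  set U := connectedComponentIn {x ∈ K | relExtremalStar B K x < c} z
  set g := U.piecewise (fun y => max (relExtremalStar B K y) c) (relExtremalStar B K)
  have hfr : ∀ x ∈ K, x ∈ closure U → x ∉ U → c ≤ relExtremalStar B K x :=
    fun x hxK hxU hx => not_lt.1 fun hlt =>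
      hx (mem_connectedComponentIn_of_mem_closure hxU ⟨hxK, hlt⟩)
  have hg : PlurisubharmonicOn (fun x => (g x : EReal)) K :=
    (plurisubharmonicOn_relExtremalStar hK).piecewise_max_const
      ((upperSemicontinuousOn_relExtremalStar hK).isOpen_sep_lt hK c).connectedComponentIn hfr
  have hg1 : ∀ x ∈ K, g x ≤ 1 := fun x hx => by
    by_cases hxU : x ∈ U <;> simp [g, hxU, relExtremalStar_le_one hK hx, hc]
  have hg0 : ∀ x ∈ B, g x ≤ 0 := fun x hx => by simp [g, hmiss x hx, hB x hx]
  have hgz : g z ≤ relExtremalStar B K z :=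
    (le_relExtremal hg hg1 hg0 hz).trans (relExtremal_le_relExtremalStar hK hz)
  have hzU : z ∈ U := mem_connectedComponentIn (F := {x ∈ K | relExtremalStar B K x < c}) ⟨hz, hzc⟩
  rw [show g z = _ from piecewise_eq_of_mem _ _ _ hzU] at hgz
  exact hzc.not_ge ((le_max_right _ _).trans hgz)

end SublevelComponents

section GlobalExtremal

variable {E : Type*} [NormedAddCommGroup E] [NormedSpace ℂ E] {A D K : Set E} {z : E}

theorem omegaExtr_le_relExtremalStar (hK : IsOpen K) (hKc : IsCompact (closure K))
    (hKD : closure K ⊆ D) (hz : z ∈ K) : omegaExtr A D z ≤ relExtremalStar (A ∩ K) K z :=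
  csInf_le ⟨0, by rintro t ⟨K', hK', -, -, hzK', rfl⟩; exact relExtremalStar_nonneg hK' hzK'⟩
    ⟨K, hK, hKc, hKD, hz, rfl⟩

variable [LocallyCompactSpace E]

theorem le_omegaExtr (hD : IsOpen D) (hz : z ∈ D) {c : ℝ}
    (h : ∀ K : Set E, IsOpen K → IsCompact (closure K) → closure K ⊆ D → z ∈ K →
      c ≤ relExtremalStar (A ∩ K) K z) : c ≤ omegaExtr A D z := by
  obtain ⟨K, hK, hzK, hKD, hKc⟩ :=
    exists_open_between_and_isCompact_closure isCompact_singleton hD (singleton_subset_iff.2 hz)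
  exact le_csInf ⟨_, K, hK, hKc, hKD, hzK rfl, rfl⟩ fun _ ⟨K, hK, hKc, hKD, hzK, ht⟩ =>
    ht ▸ h K hK hKc hKD hzK

theorem exists_relExtremalStar_lt_of_omegaExtr_lt (hD : IsOpen D) (hz : z ∈ D) {c : ℝ}
    (h : omegaExtr A D z < c) :
    ∃ K : Set E, IsOpen K ∧ IsCompact (closure K) ∧ closure K ⊆ D ∧ z ∈ K ∧
      relExtremalStar (A ∩ K) K z < c := by
  by_contra! hK
  exact h.not_ge (le_omegaExtr hD hz hK)

theorem omegaExtr_nonneg (hD : IsOpen D) (hz : z ∈ D) : 0 ≤ omegaExtr A D z :=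
  le_omegaExtr hD hz fun _ hK _ _ hzK => relExtremalStar_nonneg hK hzK

theorem omegaExtr_eq_zero_of_locallyPluriregular (hD : IsOpen D) (hA : LocallyPluriregular A)
    {a : E} (ha : a ∈ A) (haD : a ∈ D) : omegaExtr A D a = 0 := by
  obtain ⟨K, hK, haK, hKD, hKc⟩ :=
    exists_open_between_and_isCompact_closure isCompact_singleton hD (singleton_subset_iff.2 haD)
  refine le_antisymm ?_ (omegaExtr_nonneg hD haD)
  exact (omegaExtr_le_relExtremalStar hK hKc hKD (haK rfl)).trans_eq (hA a ha K hK (haK rfl))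

theorem eventually_omegaExtr_lt (hD : IsOpen D) (hz : z ∈ D) {c : ℝ} (h : omegaExtr A D z < c) :
    ∀ᶠ x in 𝓝 z, omegaExtr A D x < c := by
  obtain ⟨K, hK, hKc, hKD, hzK, hlt⟩ := exists_relExtremalStar_lt_of_omegaExtr_lt hD hz h
  filter_upwards [hK.mem_nhds hzK, eventually_relExtremalStar_lt hK hzK hlt] with x hxK hx
  exact (omegaExtr_le_relExtremalStar hK hKc hKD hxK).trans_lt hx

theorem upperSemicontinuousOn_omegaExtr (hD : IsOpen D) :
    UpperSemicontinuousOn (omegaExtr A D) D := fun _ hz _ h =>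
  nhdsWithin_le_nhds (eventually_omegaExtr_lt hD hz h)

theorem omegaExtr_lt_one (hD : IsOpen D) (hDc : IsPreconnected D) (hA : LocallyPluriregular A)
    {a : E} (ha : a ∈ A) (haD : a ∈ D) (hz : z ∈ D) : omegaExtr A D z < 1 := by
  obtain ⟨K, hK, hKc, hKcl, hKD, hzK, haK⟩ :=
    hD.exists_isPreconnected_isCompact_closure hDc hz haD
  refine (omegaExtr_le_relExtremalStar hK hKcl hKD hzK).trans_lt
    ((relExtremalStar_le_one hK hzK).lt_of_ne fun h1 => ?_)
  have hmax : IsMaxOn (relExtremalStar (A ∩ K) K) K z := fun x hx =>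
    h1 ▸ relExtremalStar_le_one hK hx
  have := (plurisubharmonicOn_relExtremalStar hK).eqOn_of_isPreconnected_of_isMaxOn hK hKc hzK
    hmax haK
  rw [Function.const_apply, h1, hA a ha K hK haK] at this
  exact zero_ne_one this

theorem exists_isPreconnected_subset_sublevel_omegaExtr (hD : IsOpen D)
    (hA : LocallyPluriregular A) (hz : z ∈ D) {c : ℝ} (hc : c ≤ 1) (h : omegaExtr A D z < c) :
    ∃ S ⊆ {x ∈ D | omegaExtr A D x < c}, IsPreconnected S ∧ z ∈ S ∧ (S ∩ A).Nonempty := by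
  obtain ⟨K, hK, hKc, hKD, hzK, hlt⟩ := exists_relExtremalStar_lt_of_omegaExtr_lt hD hz h
  obtain ⟨a, haAK, haS⟩ := exists_mem_connectedComponentIn_sublevel_relExtremalStar hK
    (fun x hx => hA x hx.1 K hK hx.2) hc hzK hlt
  have hzO : z ∈ {x ∈ K | relExtremalStar (A ∩ K) K x < c} := ⟨hzK, hlt⟩
  refine ⟨_, fun x hx => ?_, isPreconnected_connectedComponentIn,
    mem_connectedComponentIn hzO, a, haS, haAK.1⟩
  obtain ⟨hxK, hxc⟩ := connectedComponentIn_subset _ _ hx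
  exact ⟨hKD (subset_closure hxK), (omegaExtr_le_relExtremalStar hK hKc hKD hxK).trans_lt hxc⟩

end GlobalExtremal

section Cross

variable {X Y : Type*} [TopologicalSpace X] [TopologicalSpace Y]

def cross (D A : Set X) (G B : Set Y) : Set (X × Y) := D ×ˢ B ∪ A ×ˢ G

theorem isPreconnected_cross {D A : Set X} {G B : Set Y} (hD : IsPreconnected D)
    (hG : IsPreconnected G) (hAD : A ⊆ D) (hBG : B ⊆ G) {a : X} (ha : a ∈ A) {b : Y}
    (hb : b ∈ B) : IsPreconnected (cross D A G B) := by
  have hsmall : IsPreconnected (D ×ˢ {b} ∪ {a} ×ˢ G) :=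
    (hD.prod isPreconnected_singleton).union (a, b) ⟨hAD ha, rfl⟩ ⟨rfl, hBG hb⟩
      (isPreconnected_singleton.prod hG)
  refine hsmall.of_forall_exists_isPreconnected_inter
    (union_subset_union (prod_mono_right (singleton_subset_iff.2 hb))
      (prod_mono_left (singleton_subset_iff.2 ha))) ⟨(a, b), .inl ⟨hAD ha, rfl⟩⟩ ?_
  rintro ⟨x, y⟩ (⟨hx, hy⟩ | ⟨hx, hy⟩)
  · exact ⟨D ×ˢ {y}, fun p hp => .inl ⟨hp.1, hp.2 ▸ hy⟩, hD.prod isPreconnected_singleton,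
      ⟨hx, rfl⟩, (a, y), ⟨hAD ha, rfl⟩, .inr ⟨rfl, hBG hy⟩⟩
  · exact ⟨{x} ×ˢ G, fun p hp => .inr ⟨hp.1 ▸ hx, hp.2⟩, isPreconnected_singleton.prod hG,
      ⟨rfl, hy⟩, (x, b), ⟨rfl, hBG hb⟩, .inl ⟨hAD hx, rfl⟩⟩

end Cross

section CrossHat

variable {E F : Type*} [NormedAddCommGroup E] [NormedSpace ℂ E] [NormedAddCommGroup F]
  [NormedSpace ℂ F]

noncomputable def crossHat (D A : Set E) (G B : Set F) : Set (E × F) :=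
  {p | p.1 ∈ D ∧ p.2 ∈ G ∧ omegaExtr A D p.1 + omegaExtr B G p.2 < 1}

variable [LocallyCompactSpace E] [LocallyCompactSpace F] {D A : Set E} {G B : Set F}

theorem isOpen_crossHat (hD : IsOpen D) (hG : IsOpen G) : IsOpen (crossHat D A G B) := by
  have husc : UpperSemicontinuousOn (fun p : E × F => omegaExtr A D p.1 + omegaExtr B G p.2)
      (D ×ˢ G) :=
    ((upperSemicontinuousOn_omegaExtr hD).comp continuous_fst.continuousOn fun _ hp => hp.1).add
      ((upperSemicontinuousOn_omegaExtr hG).comp continuous_snd.continuousOn fun _ hp => hp.2)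
  simpa only [crossHat, mem_prod, and_assoc] using husc.isOpen_sep_lt (hD.prod hG) 1

theorem cross_subset_crossHat (hD : IsOpen D) (hDc : IsPreconnected D) (hG : IsOpen G)
    (hGc : IsPreconnected G) (hAD : A ⊆ D) (hBG : B ⊆ G) (hA : LocallyPluriregular A)
    (hB : LocallyPluriregular B) {a : E} (ha : a ∈ A) {b : F} (hb : b ∈ B) :
    cross D A G B ⊆ crossHat D A G B := by
  rintro ⟨x, y⟩ (⟨hx, hy⟩ | ⟨hx, hy⟩)
  · refine ⟨hx, hBG hy, ?_⟩
    rw [omegaExtr_eq_zero_of_locallyPluriregular hG hB hy (hBG hy), add_zero]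
    exact omegaExtr_lt_one hD hDc hA ha (hAD ha) hx
  · refine ⟨hAD hx, hy, ?_⟩
    rw [omegaExtr_eq_zero_of_locallyPluriregular hD hA hx (hAD hx), zero_add]
    exact omegaExtr_lt_one hG hGc hB hb (hBG hb) hy

-- For `p = (z, w)` take `t = S × {w}`, with `S` a connected piece of
-- `{ω_{A,D} < 1 - ω_{B,G}(w)}` through `z` reaching `A`.
theorem exists_isPreconnected_subset_crossHat (hD : IsOpen D) (hG : IsOpen G)
    (hA : LocallyPluriregular A) {p : E × F} (hp : p ∈ crossHat D A G B) :
    ∃ t ⊆ crossHat D A G B, IsPreconnected t ∧ p ∈ t ∧ (t ∩ cross D A G B).Nonempty := by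
  obtain ⟨z, w⟩ := p
  obtain ⟨hz, hw, hzw⟩ := hp
  obtain ⟨S, hSsub, hS, hzS, a, haS, haA⟩ := exists_isPreconnected_subset_sublevel_omegaExtr hD hA
    hz (sub_le_self 1 (omegaExtr_nonneg hG hw)) (lt_sub_iff_add_lt.2 hzw)
  refine ⟨S ×ˢ {w}, fun q hq => ?_, hS.prod isPreconnected_singleton, ⟨hzS, rfl⟩,
    (a, w), ⟨haS, rfl⟩, .inr ⟨haA, hw⟩⟩
  obtain ⟨hqD, hq1⟩ := hSsub hq.1
  exact ⟨hqD, hq.2 ▸ hw, by rw [hq.2]; linarith⟩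

theorem isConnected_crossHat (hD : IsOpen D) (hDc : IsPreconnected D) (hG : IsOpen G)
    (hGc : IsPreconnected G) (hAD : A ⊆ D) (hBG : B ⊆ G) (hA : LocallyPluriregular A)
    (hB : LocallyPluriregular B) (hAne : A.Nonempty) (hBne : B.Nonempty) :
    IsConnected (crossHat D A G B) := by
  obtain ⟨a, ha⟩ := hAne
  obtain ⟨b, hb⟩ := hBne
  have hcross := cross_subset_crossHat hD hDc hG hGc hAD hBG hA hB ha hb
  have hab : (a, b) ∈ cross D A G B := .inl ⟨hAD ha, hb⟩
  exact ⟨⟨(a, b), hcross hab⟩, (isPreconnected_cross hDc hGc hAD hBG ha hb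
    ).of_forall_exists_isPreconnected_inter hcross ⟨(a, b), hab⟩
    fun _ hp => exists_isPreconnected_subset_crossHat hD hG hA hp⟩

end CrossHat

/-- **Lemma 3.** Let `D ⊆ ℂⁿ`, `G ⊆ ℂᵐ` be domains and let `A ⊆ D`, `B ⊆ G` be
non-pluripolar, locally pluriregular sets.  Then
`X̂ = {(z,w) ∈ D × G : ω_{A,D}(z) + ω_{B,G}(w) < 1}` is a domain (open and connected). -/
theorem crossHat_isDomain {n m : ℕ}
    (D : Set (EuclideanSpace ℂ (Fin n))) (G : Set (EuclideanSpace ℂ (Fin m)))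
    (hD : IsOpen D) (hDconn : IsConnected D)
    (hG : IsOpen G) (hGconn : IsConnected G)
    (A : Set (EuclideanSpace ℂ (Fin n))) (B : Set (EuclideanSpace ℂ (Fin m)))
    (hAD : A ⊆ D) (hBG : B ⊆ G)
    (hAnp : ¬ Pluripolar A) (hBnp : ¬ Pluripolar B)
    (hAreg : LocallyPluriregular A) (hBreg : LocallyPluriregular B)
    (Xhat : Set (EuclideanSpace ℂ (Fin n) × EuclideanSpace ℂ (Fin m)))
    (hXhat : Xhat = {p | p.1 ∈ D ∧ p.2 ∈ G ∧
      omegaExtr A D p.1 + omegaExtr B G p.2 < 1}) :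
    IsOpen Xhat ∧ IsConnected Xhat := by
  obtain rfl : Xhat = crossHat D A G B := hXhat
  exact ⟨isOpen_crossHat hD hG, isConnected_crossHat hD hDconn.isPreconnected hG
    hGconn.isPreconnected hAD hBG hAreg hBreg (nonempty_of_not_pluripolar hAnp)
    (nonempty_of_not_pluripolar hBnp)⟩
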